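/- Let ω̃ : (0,1] → [0,∞) be a Dini function and β ∈ (0,1). Define ω♯(t) = sup over s ∈ [t,1] of (t/s)^β ω̃(s) for 0 < t ≤ 1. Then ω♯(t) ≤ C Σ_{j=0}^∞ 2^{−jβ} ( ω̃(2^j t) if 2^j t ≤ 1, else ω̃(1) ), where C depends only on the doubling constants of ω̃; consequently ω♯ is again a Dini function. -/

import Mathlib

open MeasureTheory Set

/-- `ω` is a Dini function on `(0, 1]` (with given doubling-type constants available inside). -/
def IsDini (ω : ℝ → ℝ) : Prop :=
  (∀ t ∈ Set.Ioc (0:ℝ) 1, 0 ≤ ω t) ∧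
  (∃ c₁ c₂ : ℝ, 0 < c₁ ∧ 0 < c₂ ∧ ∀ t s : ℝ, 0 < t → t ≤ 1 → t / 2 ≤ s → s ≤ t →
    c₁ * ω t ≤ ω s ∧ ω s ≤ c₂ * ω t) ∧
  ∀ t ∈ Set.Ioc (0:ℝ) 1, IntegrableOn (fun s => ω s / s) (Set.Ioo 0 t)

/-!
For `u ∈ [t, 1]` pick `j` with `2 ^ j t ≤ u < 2 ^ (j + 1) t`. Then `(t / u) ^ β ≤ 2 ^ (-j β)`, and
`u`, `2 ^ j t` both lie in `[m / 2, m]` for `m = min (2 ^ (j + 1) t) 1`, so doubling gives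
`ω u ≤ (c₂ / c₁) ω (2 ^ j t)`: every value in the supremum defining `ω♯ t` is dominated by one
term of the series.

`ω♯ t / t ^ β` is nonincreasing, which yields both the doubling property of `ω♯` and its
measurability. Since `ds / s` is invariant under dilations, the `j`-th term of the series
contributes `2 ^ (-j β) (∫₀¹ ω u / u du + j ω 1 log 2)` to the Dini integral, and these are
summable.
-/

open Filter

def DoublingWith (c₁ c₂ : ℝ) (ω : ℝ → ℝ) : Prop :=
  ∀ t s : ℝ, 0 < t → t ≤ 1 → t / 2 ≤ s → s ≤ t → c₁ * ω t ≤ ω s ∧ ω s ≤ c₂ * ω t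

noncomputable def capAtOne (ω : ℝ → ℝ) (u : ℝ) : ℝ := if u ≤ 1 then ω u else ω 1

noncomputable def dyadicTerm (β : ℝ) (ω : ℝ → ℝ) (t : ℝ) (j : ℕ) : ℝ :=
  (2:ℝ) ^ (-(j:ℝ) * β) * capAtOne ω (2 ^ j * t)

def rescaledValues (β : ℝ) (ω : ℝ → ℝ) (t : ℝ) : Set ℝ :=
  {v : ℝ | ∃ s ∈ Icc t 1, v = (t / s) ^ β * ω s}

noncomputable def sharp (β : ℝ) (ω : ℝ → ℝ) (t : ℝ) : ℝ := sSup (rescaledValues β ω t)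

theorem IsDini.congr {f g : ℝ → ℝ} (hf : IsDini f) (hfg : EqOn f g (Ioc 0 1)) : IsDini g := by
  obtain ⟨hf₀, ⟨c₁, c₂, hc₁, hc₂, hd⟩, hint⟩ := hf
  refine ⟨fun t ht => hfg ht ▸ hf₀ t ht, ⟨c₁, c₂, hc₁, hc₂, fun t s ht ht1 hts hst => ?_⟩,
    fun t ht => (hint t ht).congr_fun (fun s hs => ?_) measurableSet_Ioo⟩
  · have hs : s ∈ Ioc 0 1 := ⟨by linarith, hst.trans ht1⟩
    rw [← hfg ⟨ht, ht1⟩, ← hfg hs]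
    exact hd t s ht ht1 hts hst
  · simp only [hfg ⟨hs.1, hs.2.le.trans ht.2⟩]

theorem two_rpow_neg_natCast_mul (j : ℕ) (β : ℝ) :
    (2:ℝ) ^ (-(j:ℝ) * β) = ((2:ℝ) ^ (-β)) ^ j := by
  rw [← Real.rpow_natCast, ← Real.rpow_mul zero_le_two]
  ring_nf

theorem two_rpow_neg_lt_one {β : ℝ} (hβ : 0 < β) : (2:ℝ) ^ (-β) < 1 :=
  Real.rpow_lt_one_of_one_lt_of_neg one_lt_two (neg_lt_zero.2 hβ)

theorem inv_two_pow_rpow (j : ℕ) (β : ℝ) : ((2:ℝ) ^ j)⁻¹ ^ β = (2:ℝ) ^ (-(j:ℝ) * β) := by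
  rw [← Real.rpow_natCast, ← Real.rpow_neg zero_le_two, ← Real.rpow_mul zero_le_two]

section Doubling

variable {β c₁ c₂ t : ℝ} {ω : ℝ → ℝ}

theorem DoublingWith.le_div_mul (hd : DoublingWith c₁ c₂ ω) (hc₁ : 0 < c₁) (hc₂ : 0 ≤ c₂)
    {a b : ℝ} (ha : 0 < a) (hab : a ≤ b) (hb : b ≤ 2 * a) (hb1 : b ≤ 1) :
    ω b ≤ c₂ / c₁ * ω a := by
  set m := min (2 * a) 1
  have hm : 0 < m := lt_min (by linarith) one_pos
  have hma : m / 2 ≤ a := by linarith [min_le_left (2 * a) 1]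
  have ham : a ≤ m := le_min (by linarith) (hab.trans hb1)
  have hωm : c₁ * ω m ≤ ω a := (hd m a hm (min_le_right _ _) hma ham).1
  calc ω b ≤ c₂ * ω m := (hd m b hm (min_le_right _ _) (hma.trans hab) (le_min hb hb1)).2
    _ ≤ c₂ * (ω a / c₁) := by gcongr; rwa [le_div_iff₀ hc₁, mul_comm]
    _ = c₂ / c₁ * ω a := by ring

theorem capAtOne_nonneg (hω : ∀ t ∈ Ioc 0 1, 0 ≤ ω t) {u : ℝ} (hu : 0 < u) :
    0 ≤ capAtOne ω u := by
  unfold capAtOne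
  split_ifs with h
  · exact hω u ⟨hu, h⟩
  · exact hω 1 ⟨one_pos, le_rfl⟩

theorem dyadicTerm_nonneg (hω : ∀ t ∈ Ioc 0 1, 0 ≤ ω t) (ht : 0 < t) (j : ℕ) :
    0 ≤ dyadicTerm β ω t j :=
  mul_nonneg (by positivity) (capAtOne_nonneg hω (by positivity))

theorem summable_dyadicTerm (hβ : 0 < β) (ht : 0 < t) : Summable (dyadicTerm β ω t) := by
  refine .of_norm_bounded_eventually_nat
    ((summable_geometric_of_lt_one (by positivity) (two_rpow_neg_lt_one hβ)).mul_left ‖ω 1‖) ?_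
  -- once `2 ^ j * t > 1`, the terms are `ω 1 * (2 ^ -β) ^ j`
  obtain ⟨N, hN⟩ := pow_unbounded_of_one_lt t⁻¹ one_lt_two
  filter_upwards [eventually_ge_atTop N] with j hj
  have hjt : ¬ (2:ℝ) ^ j * t ≤ 1 :=
    not_le.2 <| (inv_lt_iff_one_lt_mul₀ ht).1 <| hN.trans_le (pow_le_pow_right₀ one_le_two hj)
  rw [dyadicTerm, capAtOne, if_neg hjt, two_rpow_neg_natCast_mul, norm_mul, norm_pow,
    Real.norm_of_nonneg (by positivity : (0:ℝ) ≤ 2 ^ (-β)), mul_comm]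

theorem exists_rpow_mul_le_dyadicTerm (hω : ∀ t ∈ Ioc 0 1, 0 ≤ ω t) (hd : DoublingWith c₁ c₂ ω)
    (hc₁ : 0 < c₁) (hc₂ : 0 ≤ c₂) (hβ : 0 ≤ β) (ht : 0 < t) {u : ℝ} (hu : u ∈ Icc t 1) :
    ∃ j, (t / u) ^ β * ω u ≤ c₂ / c₁ * dyadicTerm β ω t j := by
  obtain ⟨j, hj, hj'⟩ := exists_nat_pow_near ((one_le_div ht).2 hu.1) one_lt_two
  have hu0 : 0 < u := ht.trans_le hu.1
  have hjt : 2 ^ j * t ≤ u := (le_div_iff₀ ht).1 hj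
  have hu2 : u ≤ 2 * (2 ^ j * t) := by
    rw [div_lt_iff₀ ht, pow_succ] at hj'
    linarith
  have hpow : (t / u) ^ β ≤ (2:ℝ) ^ (-(j:ℝ) * β) := by
    rw [← inv_two_pow_rpow]
    refine Real.rpow_le_rpow (by positivity) ?_ hβ
    rw [div_le_iff₀ hu0, inv_mul_eq_div, le_div_iff₀ (by positivity)]
    linarith
  refine ⟨j, ?_⟩
  rw [dyadicTerm, capAtOne, if_pos (hjt.trans hu.2)]
  calc (t / u) ^ β * ω u ≤ (2:ℝ) ^ (-(j:ℝ) * β) * (c₂ / c₁ * ω (2 ^ j * t)) :=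
        mul_le_mul hpow (hd.le_div_mul hc₁ hc₂ (by positivity) hjt hu2 hu.2)
          (hω u ⟨hu0, hu.2⟩) (by positivity)
    _ = c₂ / c₁ * ((2:ℝ) ^ (-(j:ℝ) * β) * ω (2 ^ j * t)) := by ring

theorem rpow_mul_le_tsum_dyadicTerm (hω : ∀ t ∈ Ioc 0 1, 0 ≤ ω t) (hd : DoublingWith c₁ c₂ ω)
    (hc₁ : 0 < c₁) (hc₂ : 0 ≤ c₂) (hβ : 0 < β) (ht : 0 < t) {u : ℝ} (hu : u ∈ Icc t 1) :
    (t / u) ^ β * ω u ≤ c₂ / c₁ * ∑' j, dyadicTerm β ω t j := by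
  obtain ⟨j, hj⟩ := exists_rpow_mul_le_dyadicTerm hω hd hc₁ hc₂ hβ.le ht hu
  exact hj.trans <| mul_le_mul_of_nonneg_left
    ((summable_dyadicTerm hβ ht).le_tsum j fun k _ => dyadicTerm_nonneg hω ht k) (by positivity)

end Doubling

section Sharp

variable {β c₁ c₂ : ℝ} {ω : ℝ → ℝ}

theorem le_sharp {t s : ℝ} (hbdd : BddAbove (rescaledValues β ω t)) (hs : s ∈ Icc t 1) :
    (t / s) ^ β * ω s ≤ sharp β ω t :=
  le_csSup hbdd ⟨s, hs, rfl⟩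

theorem self_le_sharp {t : ℝ} (hbdd : BddAbove (rescaledValues β ω t)) (ht : t ∈ Ioc 0 1) :
    ω t ≤ sharp β ω t := by
  simpa [div_self ht.1.ne'] using le_sharp hbdd ⟨le_rfl, ht.2⟩

theorem sharp_nonneg (hω : ∀ t ∈ Ioc 0 1, 0 ≤ ω t) {t : ℝ}
    (hbdd : BddAbove (rescaledValues β ω t)) (ht : t ∈ Ioc 0 1) : 0 ≤ sharp β ω t :=
  (hω t ht).trans (self_le_sharp hbdd ht)

theorem bddAbove_rescaledValues (hω : ∀ t ∈ Ioc 0 1, 0 ≤ ω t) (hd : DoublingWith c₁ c₂ ω)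
    (hc₁ : 0 < c₁) (hc₂ : 0 ≤ c₂) (hβ : 0 < β) {t : ℝ} (ht : 0 < t) :
    BddAbove (rescaledValues β ω t) := by
  refine ⟨c₂ / c₁ * ∑' j, dyadicTerm β ω t j, ?_⟩
  rintro _ ⟨u, hu, rfl⟩
  exact rpow_mul_le_tsum_dyadicTerm hω hd hc₁ hc₂ hβ ht hu

theorem sharp_le_tsum_dyadicTerm (hω : ∀ t ∈ Ioc 0 1, 0 ≤ ω t) (hd : DoublingWith c₁ c₂ ω)
    (hc₁ : 0 < c₁) (hc₂ : 0 ≤ c₂) (hβ : 0 < β) {t : ℝ} (ht : 0 < t) :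
    sharp β ω t ≤ c₂ / c₁ * ∑' j, dyadicTerm β ω t j := by
  refine Real.sSup_le ?_ (mul_nonneg (by positivity) (tsum_nonneg (dyadicTerm_nonneg hω ht)))
  rintro _ ⟨u, hu, rfl⟩
  exact rpow_mul_le_tsum_dyadicTerm hω hd hc₁ hc₂ hβ ht hu

theorem sharp_le_rpow_div_mul (hω : ∀ t ∈ Ioc 0 1, 0 ≤ ω t)
    (hbdd : ∀ t ∈ Ioc 0 1, BddAbove (rescaledValues β ω t)) {a b : ℝ} (ha : 0 < a) (hab : a ≤ b)
    (hb : b ≤ 1) : sharp β ω b ≤ (b / a) ^ β * sharp β ω a := by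
  have ha' : a ∈ Ioc 0 1 := ⟨ha, hab.trans hb⟩
  have hb0 : 0 < b := ha.trans_le hab
  refine Real.sSup_le ?_ (mul_nonneg (by positivity) (sharp_nonneg hω (hbdd a ha') ha'))
  rintro _ ⟨s, hs, rfl⟩
  have hs0 : 0 < s := hb0.trans_le hs.1
  calc (b / s) ^ β * ω s = (b / a) ^ β * ((a / s) ^ β * ω s) := by
        rw [← mul_assoc, ← Real.mul_rpow (by positivity) (by positivity),
          div_mul_div_cancel₀ ha.ne']
    _ ≤ (b / a) ^ β * sharp β ω a :=
        mul_le_mul_of_nonneg_left (le_sharp (hbdd a ha') ⟨hab.trans hs.1, hs.2⟩) (by positivity)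

theorem antitoneOn_sharp_div_rpow (hω : ∀ t ∈ Ioc 0 1, 0 ≤ ω t)
    (hbdd : ∀ t ∈ Ioc 0 1, BddAbove (rescaledValues β ω t)) :
    AntitoneOn (fun t => sharp β ω t / t ^ β) (Ioc 0 1) := by
  intro a ha b hb hab
  have h := sharp_le_rpow_div_mul hω hbdd ha.1 hab hb.2
  rw [Real.div_rpow (ha.1.trans_le hab).le ha.1.le] at h
  have haβ : 0 < a ^ β := Real.rpow_pos_of_pos ha.1 β
  have hbβ : 0 < b ^ β := Real.rpow_pos_of_pos (ha.1.trans_le hab) β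
  rw [div_le_div_iff₀ hbβ haβ]
  calc sharp β ω b * a ^ β ≤ b ^ β / a ^ β * sharp β ω a * a ^ β := by gcongr
    _ = sharp β ω a * b ^ β := by field_simp

theorem rpow_neg_mul_sharp_le (hω : ∀ t ∈ Ioc 0 1, 0 ≤ ω t)
    (hbdd : ∀ t ∈ Ioc 0 1, BddAbove (rescaledValues β ω t)) (hβ : 0 ≤ β) {t s : ℝ} (ht : 0 < t)
    (ht1 : t ≤ 1) (hts : t / 2 ≤ s) (hst : s ≤ t) :
    (2:ℝ) ^ (-β) * sharp β ω t ≤ sharp β ω s := by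
  have hs : s ∈ Ioc 0 1 := ⟨by linarith, hst.trans ht1⟩
  have hratio : (t / s) ^ β ≤ (2:ℝ) ^ β :=
    Real.rpow_le_rpow (div_nonneg ht.le hs.1.le) (by rw [div_le_iff₀ hs.1]; linarith) hβ
  have h : sharp β ω t ≤ (2:ℝ) ^ β * sharp β ω s :=
    (sharp_le_rpow_div_mul hω hbdd hs.1 hst ht1).trans
      (mul_le_mul_of_nonneg_right hratio (sharp_nonneg hω (hbdd s hs) hs))
  rw [Real.rpow_neg zero_le_two, inv_mul_le_iff₀ (by positivity)]
  exact h

theorem sharp_le_max_mul (hω : ∀ t ∈ Ioc 0 1, 0 ≤ ω t) (hd : DoublingWith c₁ c₂ ω)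
    (hβ : 0 ≤ β) (hbdd : ∀ t ∈ Ioc 0 1, BddAbove (rescaledValues β ω t))
    {t s : ℝ} (ht : 0 < t) (ht1 : t ≤ 1) (hts : t / 2 ≤ s) (hst : s ≤ t) :
    sharp β ω s ≤ max 1 c₂ * sharp β ω t := by
  have ht' : t ∈ Ioc 0 1 := ⟨ht, ht1⟩
  have hsharp := sharp_nonneg hω (hbdd t ht') ht'
  refine Real.sSup_le ?_ (mul_nonneg (by positivity) hsharp)
  rintro _ ⟨u, hu, rfl⟩
  have hs0 : 0 < s := by linarith
  have hu0 : 0 < u := hs0.trans_le hu.1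
  have hωu : 0 ≤ ω u := hω u ⟨hu0, hu.2⟩
  rcases le_or_gt t u with htu | hut
  · calc (s / u) ^ β * ω u ≤ (t / u) ^ β * ω u := by gcongr
      _ ≤ sharp β ω t := le_sharp (hbdd t ht') ⟨htu, hu.2⟩
      _ ≤ max 1 c₂ * sharp β ω t := le_mul_of_one_le_left hsharp (le_max_left _ _)
  · calc (s / u) ^ β * ω u ≤ 1 * ω u := by
          gcongr
          exact Real.rpow_le_one (by positivity) ((div_le_one hu0).2 hu.1) hβ
      _ ≤ c₂ * ω t := by rw [one_mul]; exact (hd t u ht ht1 (by linarith [hu.1]) hut.le).2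
      _ ≤ max 1 c₂ * sharp β ω t :=
          mul_le_mul (le_max_right _ _) (self_le_sharp (hbdd t ht') ht') (hω t ht')
            (by positivity)

end Sharp

theorem integrable_of_norm_le_tsum {α : Type*} [MeasurableSpace α] {μ : Measure α} {f : α → ℝ}
    {g : ℕ → α → ℝ} (hf : AEStronglyMeasurable f μ) (hg : ∀ j, Integrable (g j) μ)
    (hg₀ : ∀ᵐ a ∂μ, ∀ j, 0 ≤ g j a) (hfg : ∀ᵐ a ∂μ, Summable (g · a) ∧ ‖f a‖ ≤ ∑' j, g j a)
    (hsum : Summable fun j => ∫ a, g j a ∂μ) : Integrable f μ := by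
  have hg₀' (j : ℕ) : 0 ≤ᵐ[μ] g j := hg₀.mono fun a ha => ha j
  refine ⟨hf, ?_⟩
  calc ∫⁻ a, ‖f a‖ₑ ∂μ ≤ ∫⁻ a, ∑' j, ENNReal.ofReal (g j a) ∂μ := by
        refine lintegral_mono_ae ((hg₀.and hfg).mono fun a ⟨ha₀, hsa, hle⟩ => ?_)
        rw [← ENNReal.ofReal_tsum_of_nonneg ha₀ hsa, ← ofReal_norm]
        exact ENNReal.ofReal_le_ofReal hle
    _ = ∑' j, ENNReal.ofReal (∫ a, g j a ∂μ) := by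
        rw [lintegral_tsum fun j => (hg j).aemeasurable.ennreal_ofReal]
        exact tsum_congr fun j => (ofReal_integral_eq_lintegral_ofReal (hg j) (hg₀' j)).symm
    _ = ENNReal.ofReal (∑' j, ∫ a, g j a ∂μ) :=
        (ENNReal.ofReal_tsum_of_nonneg (fun j => integral_nonneg_of_ae (hg₀' j)) hsum).symm
    _ < ⊤ := ENNReal.ofReal_lt_top

section Dilation

variable {f : ℝ → ℝ} {a b c : ℝ}

theorem comp_mul_left_div_eq (hc : c ≠ 0) (x : ℝ) : f (c * x) / x = c * (f (c * x) / (c * x)) := by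
  rw [← mul_div_assoc, mul_div_mul_left _ _ hc]

theorem IntervalIntegrable.comp_mul_left_div
    (hf : IntervalIntegrable (fun x => f x / x) volume (c * a) (c * b)) (hc : c ≠ 0) :
    IntervalIntegrable (fun x => f (c * x) / x) volume a b := by
  have := (hf.comp_mul_left (c := c)).const_mul c
  rw [mul_div_cancel_left₀ _ hc, mul_div_cancel_left₀ _ hc] at this
  simpa only [← comp_mul_left_div_eq hc] using this

theorem intervalIntegral.integral_comp_mul_left_div (hc : c ≠ 0) :
    ∫ x in a..b, f (c * x) / x = ∫ x in c * a..c * b, f x / x := by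
  simp only [comp_mul_left_div_eq hc, intervalIntegral.integral_const_mul,
    intervalIntegral.integral_comp_mul_left (fun x => f x / x) hc, smul_eq_mul,
    mul_inv_cancel_left₀ hc]

end Dilation

section CapAtOne

variable {ω : ℝ → ℝ} {c : ℝ}

theorem eqOn_capAtOne_div_Iic :
    EqOn (fun u => ω u / u) (fun u => capAtOne ω u / u) (Iic 1) := fun u hu => by
  simp only [capAtOne, if_pos (show u ≤ 1 from hu)]

theorem eqOn_capAtOne_div_Ici :
    EqOn (fun u => ω 1 * u⁻¹) (fun u => capAtOne ω u / u) (Ici 1) := fun u hu => by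
  rcases (show 1 ≤ u from hu).eq_or_lt with rfl | hu1
  · simp [capAtOne]
  · simp [capAtOne, not_le.2 hu1, div_eq_mul_inv]

theorem intervalIntegrable_capAtOne_div_one (hc : 1 ≤ c) :
    IntervalIntegrable (fun u => capAtOne ω u / u) volume 1 c := by
  refine IntervalIntegrable.congr (fun u hu => eqOn_capAtOne_div_Ici ?_) ?_
  · rw [uIoc_of_le hc] at hu
    exact hu.1.le
  · refine (continuousOn_const.mul (continuousOn_inv₀.mono fun u hu => ?_)).intervalIntegrable
    rw [uIcc_of_le hc] at hu
    exact (zero_lt_one.trans_le hu.1).ne'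

theorem intervalIntegrable_capAtOne_div
    (hint : IntervalIntegrable (fun u => ω u / u) volume 0 1) (hc : 1 ≤ c) :
    IntervalIntegrable (fun u => capAtOne ω u / u) volume 0 c := by
  refine (hint.congr fun u hu => eqOn_capAtOne_div_Iic ?_).trans
    (intervalIntegrable_capAtOne_div_one hc)
  rw [uIoc_of_le zero_le_one] at hu
  exact hu.2

theorem integral_capAtOne_div (hint : IntervalIntegrable (fun u => ω u / u) volume 0 1)
    (hc : 1 ≤ c) :
    ∫ u in 0..c, capAtOne ω u / u = (∫ u in 0..1, ω u / u) + ω 1 * Real.log c := by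
  rw [← intervalIntegral.integral_add_adjacent_intervals
    (intervalIntegrable_capAtOne_div hint le_rfl) (intervalIntegrable_capAtOne_div_one hc)]
  congr 1
  · refine intervalIntegral.integral_congr fun u hu => (eqOn_capAtOne_div_Iic ?_).symm
    rw [uIcc_of_le zero_le_one] at hu
    exact hu.2
  · calc ∫ u in 1..c, capAtOne ω u / u = ∫ u in 1..c, ω 1 * u⁻¹ :=
          intervalIntegral.integral_congr fun u hu =>
            (eqOn_capAtOne_div_Ici (by rw [uIcc_of_le hc] at hu; exact hu.1)).symm
      _ = ω 1 * Real.log c := by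
          rw [intervalIntegral.integral_const_mul,
            integral_inv_of_pos one_pos (one_pos.trans_le hc), div_one]

end CapAtOne

section Dini

variable {β c₁ c₂ : ℝ} {ω : ℝ → ℝ}

theorem aestronglyMeasurable_sharp_div (hω : ∀ t ∈ Ioc 0 1, 0 ≤ ω t)
    (hbdd : ∀ t ∈ Ioc 0 1, BddAbove (rescaledValues β ω t)) :
    AEStronglyMeasurable (fun s => sharp β ω s / s) (volume.restrict (Ioo 0 1)) := by
  have h := aemeasurable_restrict_of_antitoneOn (μ := volume) measurableSet_Ioo
    ((antitoneOn_sharp_div_rpow hω hbdd).mono Ioo_subset_Ioc_self)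
  refine (h.mul (by fun_prop : Measurable fun s : ℝ => s ^ β / s).aemeasurable)
    |>.aestronglyMeasurable.congr ?_
  filter_upwards [ae_restrict_mem measurableSet_Ioo] with s hs
  have : s ^ β ≠ 0 := (Real.rpow_pos_of_pos hs.1 β).ne'
  simp only [Pi.mul_apply]
  field_simp

theorem integrableOn_sharp_div (hω : ∀ t ∈ Ioc 0 1, 0 ≤ ω t) (hd : DoublingWith c₁ c₂ ω)
    (hc₁ : 0 < c₁) (hc₂ : 0 ≤ c₂) (hβ : 0 < β) (hint : IntegrableOn (fun u => ω u / u) (Ioo 0 1)) :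
    IntegrableOn (fun s => sharp β ω s / s) (Ioo 0 1) := by
  have hint' : IntervalIntegrable (fun u => ω u / u) volume 0 1 :=
    (intervalIntegrable_iff_integrableOn_Ioo_of_le zero_le_one).2 hint
  have hpow (j : ℕ) : (1:ℝ) ≤ 2 ^ j := one_le_pow₀ one_le_two
  have hterm (j : ℕ) : IntegrableOn (fun s => capAtOne ω (2 ^ j * s) / s) (Ioo 0 1) := by
    have h : IntervalIntegrable (fun u => capAtOne ω u / u) volume (2 ^ j * 0) (2 ^ j * 1) := by
      rw [mul_zero, mul_one]
      exact intervalIntegrable_capAtOne_div hint' (hpow j)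
    exact (intervalIntegrable_iff_integrableOn_Ioo_of_le zero_le_one).1
      (h.comp_mul_left_div (by positivity))
  have hterm_integral (j : ℕ) : ∫ s in Ioo 0 1, capAtOne ω (2 ^ j * s) / s =
      (∫ u in 0..1, ω u / u) + ω 1 * (j * Real.log 2) := by
    rw [← integral_Ioc_eq_integral_Ioo, ← intervalIntegral.integral_of_le zero_le_one,
      intervalIntegral.integral_comp_mul_left_div (by positivity), mul_zero, mul_one,
      integral_capAtOne_div hint' (hpow j), Real.log_pow]
  have hbdd (t : ℝ) (ht : 0 < t) : BddAbove (rescaledValues β ω t) :=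
    bddAbove_rescaledValues hω hd hc₁ hc₂ hβ ht
  set g : ℕ → ℝ → ℝ := fun j s => c₂ / c₁ * dyadicTerm β ω s j / s
  have hg (j : ℕ) : g j = fun s => c₂ / c₁ * 2 ^ (-(j:ℝ) * β) * (capAtOne ω (2 ^ j * s) / s) := by
    ext s
    simp only [g, dyadicTerm]
    ring
  refine integrable_of_norm_le_tsum (g := g)
    (aestronglyMeasurable_sharp_div hω fun t ht => hbdd t ht.1)
    (fun j => hg j ▸ (hterm j).const_mul _) ?_ ?_ ?_
  · filter_upwards [ae_restrict_mem measurableSet_Ioo] with s hs j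
    exact div_nonneg (mul_nonneg (by positivity) (dyadicTerm_nonneg hω hs.1 j)) hs.1.le
  · filter_upwards [ae_restrict_mem measurableSet_Ioo] with s hs
    refine ⟨((summable_dyadicTerm hβ hs.1).mul_left _).div_const _, ?_⟩
    rw [tsum_div_const, tsum_mul_left, Real.norm_of_nonneg
      (div_nonneg (sharp_nonneg hω (hbdd s hs.1) ⟨hs.1, hs.2.le⟩) hs.1.le)]
    exact div_le_div_of_nonneg_right (sharp_le_tsum_dyadicTerm hω hd hc₁ hc₂ hβ hs.1) hs.1.le
  · have hr : ‖(2:ℝ) ^ (-β)‖ < 1 := by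
      rw [Real.norm_of_nonneg (by positivity)]
      exact two_rpow_neg_lt_one hβ
    refine (((summable_geometric_of_norm_lt_one hr).mul_left (c₂ / c₁ * ∫ u in 0..1, ω u / u)).add
      ((summable_pow_mul_geometric_of_norm_lt_one 1 hr).mul_left
        (c₂ / c₁ * (ω 1 * Real.log 2)))).congr fun j => ?_
    simp only [hg, integral_const_mul, hterm_integral, two_rpow_neg_natCast_mul]
    ring

theorem isDini_sharp (hω : ∀ t ∈ Ioc 0 1, 0 ≤ ω t) (hd : DoublingWith c₁ c₂ ω)
    (hc₁ : 0 < c₁) (hc₂ : 0 ≤ c₂) (hβ : 0 < β) (hint : IntegrableOn (fun u => ω u / u) (Ioo 0 1)) :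
    IsDini (sharp β ω) := by
  have hbdd (t : ℝ) (ht : t ∈ Ioc 0 1) : BddAbove (rescaledValues β ω t) :=
    bddAbove_rescaledValues hω hd hc₁ hc₂ hβ ht.1
  refine ⟨fun t ht => sharp_nonneg hω (hbdd t ht) ht,
    ⟨2 ^ (-β), max 1 c₂, by positivity, by positivity, fun t s ht ht1 hts hst =>
      ⟨rpow_neg_mul_sharp_le hω hbdd hβ.le ht ht1 hts hst,
        sharp_le_max_mul hω hd hβ.le hbdd ht ht1 hts hst⟩⟩,
    fun t ht => (integrableOn_sharp_div hω hd hc₁ hc₂ hβ hint).mono_set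
      (Ioo_subset_Ioo_right ht.2)⟩

end Dini

theorem stmt4 (β c₁ c₂ : ℝ) (hβ : β ∈ Set.Ioo (0:ℝ) 1) (hc₁ : 0 < c₁) (hc₂ : 0 < c₂) :
    ∃ C > 0, ∀ (ωt ωs : ℝ → ℝ),
      (∀ t ∈ Set.Ioc (0:ℝ) 1, 0 ≤ ωt t) →
      (∀ t s : ℝ, 0 < t → t ≤ 1 → t / 2 ≤ s → s ≤ t → c₁ * ωt t ≤ ωt s ∧ ωt s ≤ c₂ * ωt t) →
      (∀ t ∈ Set.Ioc (0:ℝ) 1, IntegrableOn (fun s => ωt s / s) (Set.Ioo 0 t)) →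
      (∀ t ∈ Set.Ioc (0:ℝ) 1,
        ωs t = sSup {v : ℝ | ∃ s ∈ Set.Icc t 1, v = (t / s) ^ β * ωt s}) →
      (∀ t ∈ Set.Ioc (0:ℝ) 1,
        ωs t ≤ C * ∑' j : ℕ, (2:ℝ) ^ (-(j:ℝ) * β) *
          (if (2:ℝ) ^ j * t ≤ 1 then ωt ((2:ℝ) ^ j * t) else ωt 1)) ∧
      IsDini ωs := by
  refine ⟨c₂ / c₁, by positivity, fun ωt ωs hω hd hint hsup => ⟨fun t ht => ?_, ?_⟩⟩
  · rw [hsup t ht]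
    exact sharp_le_tsum_dyadicTerm hω hd hc₁ hc₂.le hβ.1 ht.1
  · exact (isDini_sharp hω hd hc₁ hc₂.le hβ.1 (hint 1 ⟨one_pos, le_rfl⟩)).congr
      fun t ht => (hsup t ht).symm
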